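/- arXiv:1707.00113 — 4 statements merged into one kernel-verified Lean document; each statement's English description precedes it below -/
import Mathlib

section
/- Let Λ = Z_2[[T]] and let X be a finitely generated Λ-module such that E_0(X) + (2,T)^n = (2, T^2) + (2,T)^n for all n ≥ 3 (equivalently E_0(X) + (2,T)^3 = (2,T^2)). Then E_0(X) = (2, T^2). More precisely: if I is an ideal of Λ with I + (2,T)^3 = (2,T^2), then I + (2,T)^n = (2,T^2) for all n ≥ 3 (by induction using (2,T)^n ⊆ (2,T)^{n-2}(2,T^2)), hence I = (2,T^2) since the ideals (2,T)^n intersect to 0. -/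
/-! The ideal `M = (2, T)` is the maximal ideal of `Λ` and `M² ⊆ J = (2, T²)`, so
`J = I + M³ ⊆ I + M J`; Nakayama's lemma (`J` is finitely generated, `M` lies in the Jacobson
radical) gives `J ⊆ I`, and `I ⊆ J` is clear. With `I = J`, every `I + Mⁿ` with `n ≥ 2` is `J`. -/

open PowerSeries IsLocalRing

namespace Ideal

variable {R : Type*} [CommRing R]

theorem span_pair_sq_le_span_pair_sq (a b : R) :
    span {a, b} ^ 2 ≤ span {a, b ^ 2} := by
  rw [sq, mul_le]
  intro r hr s hs
  obtain ⟨u, v, rfl⟩ := mem_span_pair.mp hr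
  obtain ⟨u', v', rfl⟩ := mem_span_pair.mp hs
  exact mem_span_pair.mpr
    ⟨u * (u' * a + v' * b) + v * b * u', v * v', by ring⟩

theorem eq_of_sup_pow_succ_eq {I J M : Ideal R} {k : ℕ} (hJ : J.FG)
    (hM : M ≤ jacobson ⊥) (hk : M ^ k ≤ J) (h : I + M ^ (k + 1) = J) : I = J := by
  have hIJ : I ≤ J := h ▸ le_sup_left
  refine le_antisymm hIJ (Submodule.le_of_le_smul_of_le_jacobson_bot hJ hM ?_)
  calc J = I ⊔ M * M ^ k := by rw [← pow_succ', ← h, Submodule.add_eq_sup]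
    _ ≤ I ⊔ M • J := sup_le_sup_left (mul_mono_right hk) _

end Ideal

theorem PowerSeries.span_pair_X_le_maximalIdeal {R : Type*} [CommRing R] [IsLocalRing R]
    {f : R⟦X⟧} (hf : constantCoeff f ∈ maximalIdeal R) :
    Ideal.span {f, X} ≤ maximalIdeal R⟦X⟧ := by
  rw [Ideal.span_le, Set.insert_subset_iff, Set.singleton_subset_iff]
  simp only [SetLike.mem_coe, mem_maximalIdeal, mem_nonunits_iff,
    isUnit_iff_constantCoeff, constantCoeff_X, isUnit_zero_iff, zero_ne_one, not_false_eq_true,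
    and_true]
  exact hf

/-- In `Λ = ℤ₂[[T]]`, if an ideal `I` satisfies `I + (2,T)³ = (2,T²)`
then `I + (2,T)ⁿ = (2,T²)` for all `n ≥ 3` and hence `I = (2,T²)`.
(In particular this applies to `I = E₀(X)` for a finitely generated `Λ`-module `X`.) -/
theorem stmt_7 (I : Ideal (PowerSeries ℤ_[2]))
    (h : I + (Ideal.span {(2 : PowerSeries ℤ_[2]), PowerSeries.X}) ^ 3 =
      Ideal.span {(2 : PowerSeries ℤ_[2]), PowerSeries.X ^ 2}) :
    (∀ n : ℕ, 3 ≤ n →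
      I + (Ideal.span {(2 : PowerSeries ℤ_[2]), PowerSeries.X}) ^ n =
        Ideal.span {(2 : PowerSeries ℤ_[2]), PowerSeries.X ^ 2}) ∧
    I = Ideal.span {(2 : PowerSeries ℤ_[2]), PowerSeries.X ^ 2} := by
  have hM2 := Ideal.span_pair_sq_le_span_pair_sq (2 : ℤ_[2]⟦X⟧) X
  have hMjac : Ideal.span {(2 : ℤ_[2]⟦X⟧), X} ≤ Ideal.jacobson ⊥ := by
    rw [jacobson_eq_maximalIdeal ⊥ bot_ne_top]
    refine span_pair_X_le_maximalIdeal ?_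
    rw [map_ofNat, PadicInt.maximalIdeal_eq_span_p]
    exact Ideal.subset_span (by norm_num)
  have hI := Ideal.eq_of_sup_pow_succ_eq (Submodule.fg_span (Set.toFinite _)) hMjac hM2 h
  refine ⟨fun n hn => ?_, hI⟩
  rw [hI, Submodule.add_eq_sup, sup_eq_left]
  exact (Ideal.pow_le_pow_right (by omega)).trans hM2
end

section
/- Let p be a prime, Γ a procyclic pro-p group topologically generated by γ, and identify Z_p[[Γ]] ≅ Λ = Z_p[[T]] via γ ↔ 1+T. Let M be a free pro-p group on d generators equipped with a continuous Γ-action, and set M^{(1)} = M, M^{(n)} = [M^{(n-1)}, F] where F is a pro-p group containing M as a normal subgroup with F generated by M together with elements mapping onto Γ and an involution acting on M/M_2 by inversion. Then for all n ≥ 1, the image M^{(n)}M_2/M_2 equals (p,T)^{n-1}·(M/M_2) as submodules of the free Λ-module M/M_2 ≅ Λ^d. -/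
/-!  STATEMENT 15 (formula (approx:M) of the paper, `p = 2`): Let `Λ = ℤ₂[[T]]`,
`Γ = ⟨γ⟩`.  Let `F` be a group with a normal subgroup `M` whose abelianization
`V = M/M₂` is a free `Λ`-module of rank `d` (encoded by a map `φ : F → V` which is an
additive surjection on `M` with kernel `M₂ = [M,M]`), where `F` is generated by `M`
together with an element `w` acting on `V` by `1 + T` (the `γ`-action) and an
involution `x` acting on `V` by inversion.  Setting `M⁽¹⁾ = M`,
`M⁽ⁿ⁾ = [M⁽ⁿ⁻¹⁾, F]`, the image of `M⁽ⁿ⁾` in `V` is `(2,T)^{n-1}·V`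
(below `Mseq M n = M⁽ⁿ⁺¹⁾`). -/

/-- `Mseq M 0 = M`, `Mseq M (n+1) = [Mseq M n, F]`. -/
def Mseq {F : Type*} [Group F] (M : Subgroup F) : ℕ → Subgroup F
  | 0 => M
  | n + 1 => ⁅Mseq M n, (⊤ : Subgroup F)⁆

/-!
Every element of `F` acts on `V = M/[M,M]` through a unit scalar `c ≡ 1 mod (2, T)`: this holds
for the generators (`1` on `M`, `1 + T` for `w`, `-1` for `x`) and is stable under products and
inverses. Hence `φ ⁅m, g⁆ = (1 - c) • φ m` lies in `(2, T) • φ m`, and conversely the commutators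
with `x` and `w` produce `2 • φ m` and `-T • φ m`. So passing from `M⁽ⁿ⁾` to `[M⁽ⁿ⁾, F]` multiplies
the spanned submodule by exactly `(2, T)`, and the theorem follows by induction from
`span φ(M) = V`.
-/

open scoped commutatorElement

section

variable {F : Type*} [Group F] {M : Subgroup F} {R : Type*} [CommRing R]
  {V : Type*} [AddCommGroup V] [Module R V] {φ : F → V}

lemma map_one_of_map_mul (hadd : ∀ a ∈ M, ∀ b ∈ M, φ (a * b) = φ a + φ b) : φ 1 = 0 := by
  simpa using hadd 1 M.one_mem 1 M.one_mem

lemma map_inv_of_map_mul (hadd : ∀ a ∈ M, ∀ b ∈ M, φ (a * b) = φ a + φ b) {a : F}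
    (ha : a ∈ M) : φ a⁻¹ = -φ a := by
  have h := hadd a ha a⁻¹ (M.inv_mem ha)
  rw [mul_inv_cancel, map_one_of_map_mul hadd] at h
  exact eq_neg_of_add_eq_zero_right h.symm

lemma span_image_closure (hadd : ∀ a ∈ M, ∀ b ∈ M, φ (a * b) = φ a + φ b) {s : Set F}
    (hs : s ⊆ M) :
    Submodule.span R (φ '' Subgroup.closure s) = Submodule.span R (φ '' s) := by
  refine le_antisymm ?_ (Submodule.span_mono (Set.image_mono Subgroup.subset_closure))
  rw [Submodule.span_le]
  rintro _ ⟨a, ha, rfl⟩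
  suffices a ∈ M ∧ φ a ∈ Submodule.span R (φ '' s) from this.2
  induction ha using Subgroup.closure_induction with
  | mem a ha => exact ⟨hs ha, Submodule.subset_span ⟨a, ha, rfl⟩⟩
  | one => exact ⟨M.one_mem, by rw [map_one_of_map_mul hadd]; exact Submodule.zero_mem _⟩
  | mul a b _ _ ha hb =>
    exact ⟨M.mul_mem ha.1 hb.1, by rw [hadd a ha.1 b hb.1]; exact Submodule.add_mem _ ha.2 hb.2⟩
  | inv a _ ha =>
    exact ⟨M.inv_mem ha.1, by rw [map_inv_of_map_mul hadd ha.1]; exact Submodule.neg_mem _ ha.2⟩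

def ConjActsBy (φ : F → V) (M : Subgroup F) (g : F) (c : R) : Prop :=
  ∀ a ∈ M, φ (g * a * g⁻¹) = c • φ a

namespace ConjActsBy

lemma one : ConjActsBy φ M 1 (1 : R) := by
  intro a _
  simp

lemma of_mem (hadd : ∀ a ∈ M, ∀ b ∈ M, φ (a * b) = φ a + φ b) {m : F} (hm : m ∈ M) :
    ConjActsBy φ M m (1 : R) := by
  intro a ha
  rw [hadd _ (M.mul_mem hm ha) _ (M.inv_mem hm), hadd m hm a ha, map_inv_of_map_mul hadd hm,
    one_smul]
  abel

lemma mul (hM : M.Normal) {g h : F} {c d : R} (hg : ConjActsBy φ M g c)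
    (hh : ConjActsBy φ M h d) : ConjActsBy φ M (g * h) (c * d) := by
  intro a ha
  have hconj : g * h * a * (g * h)⁻¹ = g * (h * a * h⁻¹) * g⁻¹ := by group
  rw [hconj, hg _ (hM.conj_mem a ha h), hh a ha, smul_smul]

lemma inv (hM : M.Normal) {g : F} {c : Rˣ} (hg : ConjActsBy φ M g (c : R)) :
    ConjActsBy φ M g⁻¹ ((c⁻¹ : Rˣ) : R) := by
  intro a ha
  have h := hg _ (hM.conj_mem a ha g⁻¹)
  rw [show g * (g⁻¹ * a * g⁻¹⁻¹) * g⁻¹ = a by group] at h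
  rw [h, smul_smul, Units.inv_mul, one_smul]

lemma map_commutatorElement (hM : M.Normal) (hadd : ∀ a ∈ M, ∀ b ∈ M, φ (a * b) = φ a + φ b)
    {g : F} {c : R} (hg : ConjActsBy φ M g c) {m : F} (hm : m ∈ M) :
    φ ⁅m, g⁆ = (1 - c) • φ m := by
  have hm' : g * m⁻¹ * g⁻¹ ∈ M := hM.conj_mem _ (M.inv_mem hm) g
  rw [show ⁅m, g⁆ = m * (g * m⁻¹ * g⁻¹) by rw [commutatorElement_def]; group, hadd m hm _ hm',
    hg _ (M.inv_mem hm), map_inv_of_map_mul hadd hm, sub_smul, one_smul, smul_neg, sub_eq_add_neg]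

end ConjActsBy

theorem exists_conjActsBy_of_closure_eq_top (I : Ideal R) (hM : M.Normal)
    (hadd : ∀ a ∈ M, ∀ b ∈ M, φ (a * b) = φ a + φ b) {T : Set F}
    (hgen : Subgroup.closure ((M : Set F) ∪ T) = ⊤)
    (hT : ∀ t ∈ T, ∃ c : Rˣ, 1 - (c : R) ∈ I ∧ ConjActsBy φ M t (c : R)) (g : F) :
    ∃ c : Rˣ, 1 - (c : R) ∈ I ∧ ConjActsBy φ M g (c : R) := by
  have hg : g ∈ Subgroup.closure ((M : Set F) ∪ T) := hgen ▸ Subgroup.mem_top g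
  induction hg using Subgroup.closure_induction with
  | mem t ht =>
    rcases ht with hm | ht
    · exact ⟨1, by simp, ConjActsBy.of_mem hadd hm⟩
    · exact hT t ht
  | one => exact ⟨1, by simp, ConjActsBy.one⟩
  | mul g h _ _ hg hh =>
    obtain ⟨c, hcI, hc⟩ := hg
    obtain ⟨d, hdI, hd⟩ := hh
    refine ⟨c * d, ?_, by exact_mod_cast hc.mul hM hd⟩
    have hsplit : 1 - ((c * d : Rˣ) : R) = (1 - c) + c * (1 - d) := by push_cast; ring
    rw [hsplit]
    exact I.add_mem hcI (I.mul_mem_left _ hdI)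
  | inv g _ hg =>
    obtain ⟨c, hcI, hc⟩ := hg
    refine ⟨c⁻¹, ?_, hc.inv hM⟩
    have hsplit : 1 - ((c⁻¹ : Rˣ) : R) = -((c⁻¹ : Rˣ) : R) * (1 - c) := by
      rw [neg_mul, mul_sub, mul_one, Units.inv_mul, neg_sub]
    rw [hsplit]
    exact I.mul_mem_left _ hcI

theorem span_image_commutator_top (hM : M.Normal)
    (hadd : ∀ a ∈ M, ∀ b ∈ M, φ (a * b) = φ a + φ b) {S : Set R} {N : Subgroup F} (hN : N ≤ M)
    (hact : ∀ g : F, ∃ c : R, 1 - c ∈ Ideal.span S ∧ ConjActsBy φ M g c)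
    (hS : ∀ r ∈ S, ∃ g : F, ConjActsBy φ M g (1 - r)) :
    Submodule.span R (φ '' ((⁅N, ⊤⁆ : Subgroup F) : Set F)) =
      Ideal.span S • Submodule.span R (φ '' N) := by
  have hcomm_le : {a | ∃ n ∈ N, ∃ g ∈ (⊤ : Subgroup F), ⁅n, g⁆ = a} ⊆ M := by
    rintro _ ⟨n, hn, g, -, rfl⟩
    exact Subgroup.commutator_le_left M ⊤ (Subgroup.commutator_mem_commutator (hN hn) trivial)
  rw [Subgroup.commutator_def, span_image_closure hadd hcomm_le]
  apply le_antisymm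
  · rw [Submodule.span_le]
    rintro _ ⟨_, ⟨n, hn, g, -, rfl⟩, rfl⟩
    obtain ⟨c, hcI, hc⟩ := hact g
    rw [hc.map_commutatorElement hM hadd (hN hn)]
    exact Submodule.smul_mem_smul hcI (Submodule.subset_span ⟨n, hn, rfl⟩)
  · rw [Submodule.span_smul_span, Submodule.span_le]
    rintro _ ⟨r, hr, _, ⟨n, hn, rfl⟩, rfl⟩
    obtain ⟨g, hg⟩ := hS r hr
    have h := hg.map_commutatorElement hM hadd (hN hn)
    rw [sub_sub_cancel] at h
    exact Submodule.subset_span ⟨⁅n, g⁆, ⟨n, hn, g, trivial, rfl⟩, h⟩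

end

lemma Mseq_le {F : Type*} [Group F] {M : Subgroup F} (hM : M.Normal) (n : ℕ) : Mseq M n ≤ M := by
  induction n with
  | zero => exact le_rfl
  | succ n ih => exact (Subgroup.commutator_mono ih le_rfl).trans (Subgroup.commutator_le_left M ⊤)

theorem stmt_15_general {F : Type*} [Group F] (M : Subgroup F) (hM : M.Normal)
    {V : Type*} [AddCommGroup V] [Module (PowerSeries ℤ_[2]) V]
    (φ : F → V)
    (hadd : ∀ a ∈ M, ∀ b ∈ M, φ (a * b) = φ a + φ b)
    (hsurj : ∀ v : V, ∃ a ∈ M, φ a = v)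
    (w x : F)
    (hw : ∀ a ∈ M,
      φ (w * a * w⁻¹) = (1 + PowerSeries.X : PowerSeries ℤ_[2]) • φ a)
    (hx : ∀ a ∈ M, φ (x * a * x⁻¹) = - φ a)
    (hgen : Subgroup.closure ((M : Set F) ∪ {w, x}) = ⊤) :
    ∀ n : ℕ,
      Submodule.span (PowerSeries ℤ_[2]) (φ '' (Mseq M n : Set F)) =
        (Ideal.span {(2 : PowerSeries ℤ_[2]), PowerSeries.X}) ^ n •
          (⊤ : Submodule (PowerSeries ℤ_[2]) V) := by
  -- `x` acts by `1 - 2` and `w` by `1 - (-T)`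
  have hI : Ideal.span {(2 : PowerSeries ℤ_[2]), PowerSeries.X} =
      Ideal.span {2, -PowerSeries.X} := by
    rw [Ideal.span_insert, Ideal.span_insert, Ideal.span_singleton_neg]
  have hunit : IsUnit (1 + PowerSeries.X : PowerSeries ℤ_[2]) := by
    simp [PowerSeries.isUnit_iff_constantCoeff]
  have hact := exists_conjActsBy_of_closure_eq_top (Ideal.span {2, -PowerSeries.X}) hM hadd hgen
    (by
      rintro t (rfl | rfl)
      · exact ⟨hunit.unit, by simpa using Ideal.subset_span (by simp), hw⟩
      · exact ⟨-1, by norm_num; exact Ideal.subset_span (by simp),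
          fun a ha => by simpa using hx a ha⟩)
  intro n
  rw [hI]
  induction n with
  | zero =>
    rw [pow_zero, Ideal.one_eq_top, Submodule.top_smul, eq_top_iff]
    rintro v -
    obtain ⟨a, ha, rfl⟩ := hsurj v
    exact Submodule.subset_span ⟨a, ha, rfl⟩
  | succ n ih =>
    rw [Mseq, span_image_commutator_top hM hadd (Mseq_le hM n)
      (fun g => let ⟨c, hc⟩ := hact g; ⟨(c : PowerSeries ℤ_[2]), hc⟩) ?_, ih, pow_succ',
      Submodule.mul_smul]
    rintro r (rfl | rfl)
    · exact ⟨x, fun a ha => by rw [hx a ha]; norm_num [sub_smul]⟩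
    · exact ⟨w, fun a ha => by rw [hw a ha, sub_neg_eq_add]⟩

theorem stmt_15 {F : Type*} [Group F] (M : Subgroup F) (hM : M.Normal)
    {V : Type*} [AddCommGroup V] [Module (PowerSeries ℤ_[2]) V]
    (d : ℕ) (bV : Module.Basis (Fin d) (PowerSeries ℤ_[2]) V) (φ : F → V)
    (hadd : ∀ a ∈ M, ∀ b ∈ M, φ (a * b) = φ a + φ b)
    (hsurj : ∀ v : V, ∃ a ∈ M, φ a = v)
    (hker : ∀ a ∈ M, (φ a = 0 ↔ a ∈ ⁅M, M⁆))
    (w x : F)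
    (hw : ∀ a ∈ M,
      φ (w * a * w⁻¹) = (1 + PowerSeries.X : PowerSeries ℤ_[2]) • φ a)
    (hx : ∀ a ∈ M, φ (x * a * x⁻¹) = - φ a) (hx2 : x * x ∈ M)
    (hgen : Subgroup.closure ((M : Set F) ∪ {w, x}) = ⊤) :
    ∀ n : ℕ,
      Submodule.span (PowerSeries ℤ_[2]) (φ '' (Mseq M n : Set F)) =
        (Ideal.span {(2 : PowerSeries ℤ_[2]), PowerSeries.X}) ^ n •
          (⊤ : Submodule (PowerSeries ℤ_[2]) V) :=
  stmt_15_general M hM φ hadd hsurj w x hw hx hgen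
end

section
/- Let H be a free pro-2 group on generators including w_{01}, w_{02}, w_i, let Γ = ⟨γ⟩ ≅ Z_2, let Φ : Z_2[[H]] → Λ = Z_2[[T]] be induced by w_{01}, w_{02} ↦ γ = 1+T and w_i ↦ 1. Then, modulo the ideal (2,T)^3 of Λ: Φ(∂(w_{01} w_i w_{02}^{-1} w_i^{-1})/∂w) ≡ δ_{w,w_{01}} − δ_{w,w_{02}} + T·δ_{w,w_i}, and Φ(∂([w_i w_{02} w_i^{-1}, w_{01}])/∂w) ≡ T·δ_{w,w_{01}} − T·δ_{w,w_{02}} + T^2·δ_{w,w_i}, for w ranging over the generators. -/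
/-!  Pro-2 Fox derivative machinery, composed with the map `Φ` to `Λ = ℤ₂[[T]]`.
The free group on generators indexed by `Fin m` plays the role of the free pro-2
group `H̄` on `w₀₁, w₀₂, w₁, …`; the generators with index `0` and `1` are `w₀₁`
and `w₀₂` (mapping to the generator `γ = 1 + T` of `Γ ≅ ℤ₂ ⊆ Λˣ`), all other
generators map to `1`.  `foxD w y` is `Φ(∂y/∂x_w)`. -/

noncomputable section

/-- The unit `1 + T` of `Λ = ℤ₂[[T]]`. -/
def oneAddX : (PowerSeries ℤ_[2])ˣ :=
  Units.mkOfMulEqOne (1 + PowerSeries.X)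
    ((1 + PowerSeries.X : PowerSeries ℤ_[2]).invOfUnit 1)
    (PowerSeries.mul_invOfUnit _ _ (by simp))

/-- `Φ` on a positive generator. -/
def genVal {m : ℕ} (j : Fin m) : PowerSeries ℤ_[2] :=
  if (j : ℕ) = 0 ∨ (j : ℕ) = 1 then (oneAddX : PowerSeries ℤ_[2]) else 1

/-- `Φ` on the inverse of a generator. -/
def genInvVal {m : ℕ} (j : Fin m) : PowerSeries ℤ_[2] :=
  if (j : ℕ) = 0 ∨ (j : ℕ) = 1 then ((oneAddX⁻¹ : (PowerSeries ℤ_[2])ˣ) : PowerSeries ℤ_[2]) else 1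

/-- `Φ ∘ (∂/∂x_w)` on a word, by the Fox product rule. -/
def foxWord {m : ℕ} (w : Fin m) : List (Fin m × Bool) → PowerSeries ℤ_[2]
  | [] => 0
  | (a, true) :: l => (if a = w then 1 else 0) + genVal a * foxWord w l
  | (a, false) :: l => (if a = w then -genInvVal a else 0) + genInvVal a * foxWord w l

/-- The pro-2 Fox derivative composed with `Φ`: `foxD w y = Φ(∂y/∂x_w) ∈ Λ`. -/
def foxD {m : ℕ} (w : Fin m) (y : FreeGroup (Fin m)) : PowerSeries ℤ_[2] :=
  foxWord w y.toWord

/-- The homomorphism `Φ` restricted to the group: `H̄ → Γ ⊆ Λˣ`, `w₀₁, w₀₂ ↦ 1 + T`,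
`wᵢ ↦ 1`; its kernel is `M̄`. -/
def phiHom {m : ℕ} : FreeGroup (Fin m) →* (PowerSeries ℤ_[2])ˣ :=
  FreeGroup.lift fun j => if (j : ℕ) = 0 ∨ (j : ℕ) = 1 then oneAddX else 1

end

/-! The composite `foxD w` of the Fox derivative with `Φ` is a crossed homomorphism along
`phiHom`, since `foxWord` is invariant under free reduction. As `Λ` is commutative, this gives
`∂⁅x, y⁆ = (1 - Φ y) ∂x + (Φ x - 1) ∂y`, and with `Φ w₀₁ = Φ w₀₂ = 1 + T`, `Φ wᵢ = 1` both
congruences hold as equalities in `Λ`. -/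

local notation "Λ" => PowerSeries ℤ_[2]

section FoxDerivative

open FreeGroup hiding map_mul map_inv

open scoped commutatorElement

variable {m : ℕ}

theorem phiHom_mk_singleton (a : Fin m) (b : Bool) :
    (phiHom (mk [(a, b)]) : Λ) = if b then genVal a else genInvVal a := by
  by_cases ha : (a : ℕ) = 0 ∨ (a : ℕ) = 1 <;> cases b <;>
    simp [phiHom, lift_mk, genVal, genInvVal, ha]

theorem foxWord_cons (w : Fin m) (x : Fin m × Bool) (l : List (Fin m × Bool)) :
    foxWord w (x :: l) = foxWord w [x] + phiHom (mk [x]) * foxWord w l := by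
  obtain ⟨a, _ | _⟩ := x <;> simp [foxWord, phiHom_mk_singleton]

theorem foxWord_append (w : Fin m) (l₁ l₂ : List (Fin m × Bool)) :
    foxWord w (l₁ ++ l₂) = foxWord w l₁ + phiHom (mk l₁) * foxWord w l₂ := by
  induction l₁ with
  | nil => simp [foxWord, ← one_eq_mk]
  | cons x l ih =>
    have hmk : mk (x :: l) = mk [x] * mk l := by rw [mul_mk]; rfl
    rw [List.cons_append, foxWord_cons, ih, foxWord_cons w x l, hmk, map_mul, Units.val_mul]
    ring

theorem foxWord_cancel (w a : Fin m) (b : Bool) (l : List (Fin m × Bool)) :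
    foxWord w ((a, b) :: (a, !b) :: l) = foxWord w l := by
  have hγ : genVal a * genInvVal a = 1 := by
    simp only [genVal, genInvVal]
    split_ifs <;> simp
  cases b <;> simp only [foxWord, Bool.not_true, Bool.not_false]
  · split_ifs <;> linear_combination foxWord w l * hγ
  · split_ifs
    · linear_combination (foxWord w l - 1) * hγ
    · linear_combination foxWord w l * hγ

theorem foxWord_eq_of_red (w : Fin m) {l₁ l₂ : List (Fin m × Bool)} (h : Red l₁ l₂) :
    foxWord w l₁ = foxWord w l₂ := by
  induction h with
  | refl => rfl
  | tail _ step ih =>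
    obtain ⟨⟩ := step
    rw [ih, foxWord_append, foxWord_append, foxWord_cancel]

theorem foxD_mul (w : Fin m) (x y : FreeGroup (Fin m)) :
    foxD w (x * y) = foxD w x + phiHom x * foxD w y := by
  rw [foxD, toWord_mul, ← foxWord_eq_of_red w reduce.red, foxWord_append, mk_toWord, foxD, foxD]

theorem foxD_one (w : Fin m) : foxD w 1 = 0 := by
  rw [foxD, toWord_one, foxWord]

theorem foxD_of (w a : Fin m) : foxD w (of a) = if w = a then 1 else 0 := by
  simp [foxD, toWord_of, foxWord, eq_comm]

theorem foxD_inv (w : Fin m) (x : FreeGroup (Fin m)) :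
    foxD w x⁻¹ = -((phiHom x)⁻¹ : Λˣ) * foxD w x := by
  have h := foxD_mul w x⁻¹ x
  rw [inv_mul_cancel, foxD_one, map_inv] at h
  linear_combination -h

theorem foxD_commutatorElement (w : Fin m) (x y : FreeGroup (Fin m)) :
    foxD w ⁅x, y⁆ = (1 - phiHom y) * foxD w x + (phiHom x - 1) * foxD w y := by
  have hx : (phiHom x : Λ) * ((phiHom x)⁻¹ : Λˣ) = 1 := Units.mul_inv _
  have hy : (phiHom y : Λ) * ((phiHom y)⁻¹ : Λˣ) = 1 := Units.mul_inv _
  simp only [commutatorElement_def, foxD_mul, foxD_inv, map_mul, map_inv, Units.val_mul]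
  linear_combination (-foxD w x * phiHom y - foxD w y * phiHom y * ((phiHom y)⁻¹ : Λˣ)) * hx -
    foxD w y * hy

theorem phiHom_of_of_eq_zero_or_eq_one {a : Fin m} (ha : (a : ℕ) = 0 ∨ (a : ℕ) = 1) :
    phiHom (of a) = oneAddX := by
  simp [phiHom, ha]

theorem phiHom_of_of_ne_zero_of_ne_one {a : Fin m} (ha0 : (a : ℕ) ≠ 0) (ha1 : (a : ℕ) ≠ 1) :
    phiHom (of a) = 1 := by
  simp [phiHom, ha0, ha1]

open PowerSeries

variable {w01 w02 wi : Fin m}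

theorem foxD_relator (h01 : phiHom (of w01) = oneAddX) (h02 : phiHom (of w02) = oneAddX)
    (hi : phiHom (of wi) = 1) (w : Fin m) :
    foxD w (of w01 * of wi * (of w02)⁻¹ * (of wi)⁻¹) =
      (if w = w01 then 1 else 0) - (if w = w02 then 1 else 0) + X * (if w = wi then 1 else 0) := by
  have hγ : (oneAddX : Λ) * (oneAddX⁻¹ : Λˣ) = 1 := Units.mul_inv _
  simp only [foxD_mul, foxD_inv, foxD_of, map_mul, map_inv, Units.val_mul, h01, h02, hi,
    inv_one, Units.val_one]
  have hX : (oneAddX : Λ) = 1 + X := rfl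
  rw [hX] at hγ ⊢
  linear_combination (-(if w = w02 then 1 else 0) - (if w = wi then 1 else 0) : Λ) * hγ

theorem foxD_commutatorElement_conj (h01 : phiHom (of w01) = oneAddX)
    (h02 : phiHom (of w02) = oneAddX) (hi : phiHom (of wi) = 1) (w : Fin m) :
    foxD w ⁅of wi * of w02 * (of wi)⁻¹, of w01⁆ =
      X * (if w = w01 then 1 else 0) - X * (if w = w02 then 1 else 0) +
        X ^ 2 * (if w = wi then 1 else 0) := by
  simp only [foxD_commutatorElement, foxD_mul, foxD_inv, foxD_of, map_mul, map_inv,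
    Units.val_mul, h01, h02, hi, inv_one, Units.val_one]
  have hX : (oneAddX : Λ) = 1 + X := rfl
  rw [hX]
  ring

end FoxDerivative

open scoped commutatorElement in
open PowerSeries in
/-- explicit Fox derivative computations modulo `(2,T)³` in
`Λ = ℤ₂[[T]]`: writing `w₀₁, w₀₂` for the generators of index `0, 1` and `wᵢ` for a
generator of index `i ∉ {0,1}`,
`Φ(∂(w₀₁ wᵢ w₀₂⁻¹ wᵢ⁻¹)/∂w) ≡ δ_{w,w₀₁} − δ_{w,w₀₂} + T·δ_{w,wᵢ}` and
`Φ(∂[wᵢ w₀₂ wᵢ⁻¹, w₀₁]/∂w) ≡ T·δ_{w,w₀₁} − T·δ_{w,w₀₂} + T²·δ_{w,wᵢ}`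
for every generator `w`. -/
theorem stmt_17 {m : ℕ} (w01 w02 wi : Fin m)
    (h0 : (w01 : ℕ) = 0) (h1 : (w02 : ℕ) = 1)
    (hi0 : (wi : ℕ) ≠ 0) (hi1 : (wi : ℕ) ≠ 1) (w : Fin m) :
    foxD w (FreeGroup.of w01 * FreeGroup.of wi *
        (FreeGroup.of w02)⁻¹ * (FreeGroup.of wi)⁻¹) -
      ((if w = w01 then 1 else 0) - (if w = w02 then 1 else 0) +
        X * (if w = wi then 1 else 0)) ∈
      (Ideal.span {(2 : PowerSeries ℤ_[2]), X}) ^ 3 ∧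
    foxD w ⁅FreeGroup.of wi * FreeGroup.of w02 * (FreeGroup.of wi)⁻¹,
        FreeGroup.of w01⁆ -
      (X * (if w = w01 then 1 else 0) - X * (if w = w02 then 1 else 0) +
        X ^ 2 * (if w = wi then 1 else 0)) ∈
      (Ideal.span {(2 : PowerSeries ℤ_[2]), X}) ^ 3 := by
  have h01 := phiHom_of_of_eq_zero_or_eq_one (Or.inl h0)
  have h02 := phiHom_of_of_eq_zero_or_eq_one (Or.inr h1)
  have hi := phiHom_of_of_ne_zero_of_ne_one hi0 hi1
  rw [foxD_relator h01 h02 hi, foxD_commutatorElement_conj h01 h02 hi, sub_self, sub_self]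
  exact ⟨zero_mem _, zero_mem _⟩
end

section
/- Let H be a group with an automorphism τ of order 2, let F be generated by H and an element x with x^{-1}hx = h^τ for h ∈ H, and suppose w_{01}, w_{02} ∈ H satisfy w_{01}^τ = w_{02}, and suppose Φ : Z_2[[H]] → Λ is a continuous ring homomorphism with Φ(h^τ) = Φ(h) for all h ∈ H, and the Fox derivative chain rule ∂ρ/∂w_{02} = (∂(ρ^τ)/∂w_{01})^τ holds (where τ acts on derivatives via the induced map). Then for any ρ in the kernel M of the natural map H → Γ with the property that Φ∘∂/∂w is Z_2-linear on M and the τ-action on M/M_2 is by inversion: Φ(∂ρ/∂w_{02}) = −Φ(∂ρ/∂w_{01}). -/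
/-- Let `H` be a group with an endomorphism `τ` of order 2 (coming from
conjugation by `x_d`), `M ≤ H` the kernel of the map to `Γ`, and
`D₀₁ = Φ∘(∂/∂w₀₁), D₀₂ = Φ∘(∂/∂w₀₂) : H → Λ = ℤ₂[[T]]` the Fox derivatives composed
with `Φ`.  Assume:
* the chain rule combined with `Φ`-invariance under `τ`: `D₀₂(ρ) = D₀₁(ρ^τ)` on `M`;
* `Φ∘∂/∂w₀₁` is additive on `M` (hence kills `M₂ = [M,M]`);
* `τ` preserves `M` and acts on `M/M₂` by inversion: `ρ^τ·ρ ∈ M₂`.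
Then `D₀₂(ρ) = −D₀₁(ρ)` for all `ρ ∈ M`. -/
theorem stmt_18 {H : Type*} [Group H] (M : Subgroup H) (τ : H →* H)
    (hτ2 : ∀ h : H, τ (τ h) = h)
    (D01 D02 : H → PowerSeries ℤ_[2])
    (hchain : ∀ ρ ∈ M, D02 ρ = D01 (τ ρ))
    (hlin : ∀ ρ1 ∈ M, ∀ ρ2 ∈ M, D01 (ρ1 * ρ2) = D01 ρ1 + D01 ρ2)
    (hτM : ∀ ρ ∈ M, τ ρ ∈ M ∧ (τ ρ) * ρ ∈ ⁅M, M⁆) :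
    ∀ ρ ∈ M, D02 ρ = - D01 ρ := by
  -- D01 1 = 0
  have h1 : D01 1 = 0 := by
    have := hlin 1 M.one_mem 1 M.one_mem
    simpa using this
  -- D01 of inverses
  have hinv : ∀ ρ ∈ M, D01 ρ⁻¹ = - D01 ρ := by
    intro ρ hρ
    have := hlin ρ hρ ρ⁻¹ (M.inv_mem hρ)
    simp [h1] at this
    linear_combination -this
  -- The set where D01 vanishes (within M) is a subgroup
  let K : Subgroup H :=
    { carrier := {h | h ∈ M ∧ D01 h = 0}
      one_mem' := ⟨M.one_mem, h1⟩
      mul_mem' := by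
        rintro a b ⟨haM, ha⟩ ⟨hbM, hb⟩
        exact ⟨M.mul_mem haM hbM, by rw [hlin a haM b hbM, ha, hb, add_zero]⟩
      inv_mem' := by
        rintro a ⟨haM, ha⟩
        exact ⟨M.inv_mem haM, by rw [hinv a haM, ha, neg_zero]⟩ }
  have hKM : ⁅M, M⁆ ≤ K := by
    rw [Subgroup.commutator_le]
    intro g hg h hh
    refine ⟨M.mul_mem (M.mul_mem (M.mul_mem hg hh) (M.inv_mem hg)) (M.inv_mem hh), ?_⟩
    rw [commutatorElement_def,
      hlin _ (M.mul_mem (M.mul_mem hg hh) (M.inv_mem hg)) _ (M.inv_mem hh),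
      hlin _ (M.mul_mem hg hh) _ (M.inv_mem hg),
      hlin _ hg _ hh, hinv g hg, hinv h hh]
    ring
  intro ρ hρ
  obtain ⟨hτρ, hcomm⟩ := hτM ρ hρ
  have h0 : D01 (τ ρ * ρ) = 0 := (hKM hcomm).2
  rw [hlin _ hτρ _ hρ] at h0
  rw [hchain ρ hρ]
  linear_combination h0
end
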